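/- Let A be an alternative ring and R a two-sided ideal of A. Let x, y ∈ A be quasiregular with quasiinverses a, b respectively, and let u ∈ R be quasiregular. Then (x ∘ u) ∘ a ∈ R and ((u ∘ x) ∘ y) ∘ (b ∘ a) ∈ R. (These are the membership computations showing that the circle loop U*(R) of quasiregular elements of R is a normal subloop of the circle loop U*(A).) -/

import Mathlib

/-- The circle operation `x ∘ y = x + y - x * y`. -/
def circ {A : Type*} [NonUnitalNonAssocRing A] (x y : A) : A := x + y - x * y

/-- `b` is a quasiinverse of `a`: `a + b - a*b = 0` and `a + b - b*a = 0`. -/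
def IsQuasiinv {A : Type*} [NonUnitalNonAssocRing A] (a b : A) : Prop :=
  a + b - a * b = 0 ∧ a + b - b * a = 0

/-- `a` is quasiregular: it has a quasiinverse. -/
def IsQuasireg {A : Type*} [NonUnitalNonAssocRing A] (a : A) : Prop :=
  ∃ b, IsQuasiinv a b

/-!
Modulo the ideal `R` the circle operation is compatible with the congruence, so `u` may be
replaced by `0`; the memberships then reduce to `x ∘ a = 0` and `(x ∘ y) ∘ (b ∘ a) = 0`.
In the unitization `x ∘ y` corresponds to `(1 - x)(1 - y)`, so the second identity says that
`(1 - b)(1 - a)` inverts `(1 - x)(1 - y)`. In a unital alternative ring this follows from the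
inverse property `p (p⁻¹ z) = z`, itself a consequence of the left Moufang identity, together
with the alternating associator: the cocycle identity kills `[p q, q⁻¹, p⁻¹]`.
-/

class IsAlternative (A : Type*) [Mul A] : Prop where
  mul_self_mul (x y : A) : x * (x * y) = x * x * y
  mul_mul_self (x y : A) : y * x * x = y * (x * x)

section Alternative

variable {A : Type*} [NonUnitalNonAssocRing A] [IsAlternative A]

theorem associator_self_left (x y : A) : associator x x y = 0 := by
  simp [associator, IsAlternative.mul_self_mul]

theorem associator_self_right (x y : A) : associator x y y = 0 := by
  simp [associator, IsAlternative.mul_mul_self]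

theorem associator_swap_left (x y z : A) : associator y x z = -associator x y z := by
  have h := IsAlternative.mul_self_mul (x + y) z
  simp only [add_mul, mul_add, IsAlternative.mul_self_mul] at h
  simp only [associator]
  linear_combination (norm := abel1) -h

theorem associator_swap_right (x y z : A) : associator x z y = -associator x y z := by
  have h := IsAlternative.mul_mul_self (y + z) x
  simp only [add_mul, mul_add, IsAlternative.mul_mul_self] at h
  simp only [associator]
  linear_combination (norm := abel1) h

theorem associator_self_middle (x y : A) : associator x y x = 0 := by
  rw [associator_swap_left, associator_self_right, neg_zero]

theorem associator_cycle (x y z : A) : associator x y z = associator z x y := by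
  rw [associator_swap_left x z y, associator_swap_right x y z, neg_neg]

theorem associator_mul_self_left (x y z : A) :
    associator (y * x) x z = -(x * associator x y z) := by
  have t1 := associator_cocycle x x y z
  have t2 := associator_cocycle x x z y
  have t3 := associator_cocycle x y x z
  simp only [associator_self_left, associator_self_middle, zero_mul, add_zero, sub_zero]
    at t1 t2 t3
  rw [associator_swap_left (x * y) x z] at t1
  rw [associator_swap_right (x * x) y z, associator_swap_right x y (x * z),
    associator_swap_right x y z, mul_neg] at t2
  rw [associator_swap_left (y * x) x z, associator_swap_left x y z, mul_neg] at t3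
  linear_combination (norm := abel1) t1 + t2 - t3

theorem mul_left_moufang (x y z : A) : x * (y * (x * z)) = x * y * x * z := by
  have t := associator_cocycle x y x z
  rw [associator_self_middle, zero_mul, add_zero, associator_swap_left (y * x) x z,
    associator_mul_self_left, associator_swap_left x y z, mul_neg] at t
  simp only [associator, mul_sub] at t
  linear_combination (norm := abel1) t

end Alternative

section Unital

variable {B : Type*} [NonAssocRing B] [IsAlternative B] {a a' : B}

theorem mul_mul_cancel_left_of_mul_eq_one (h : a * a' = 1) (h' : a' * a = 1) (z : B) :
    a * (a' * z) = z := by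
  have hsum : ∀ w, a * (a' * w) + a' * (a * w) = w + w := by
    intro w
    have s := associator_swap_left a a' w
    simp only [associator, h, h', one_mul] at s
    linear_combination (norm := abel1) -s
  have hidem : a * (a' * (a * (a' * z))) = a * (a' * z) := by
    rw [mul_left_moufang, h, one_mul]
  have hinv : a * (a' * (a' * (a * z))) = z := by
    rw [IsAlternative.mul_self_mul, mul_left_moufang, ← IsAlternative.mul_mul_self,
      h, one_mul, h', one_mul]
  -- `T = L_a L_a'` and `S = L_a' L_a` satisfy `T + S = 2`, `T² = T`, `TS = 1`, so `T = TS = 1`.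
  calc a * (a' * z) = a * (a' * (z + z)) - a * (a' * (a * (a' * z))) := by
        rw [hidem, mul_add, mul_add]; abel
    _ = a * (a' * (a' * (a * z))) := by rw [← mul_sub, ← mul_sub, ← hsum z, add_sub_cancel_left]
    _ = z := hinv

theorem associator_eq_zero_of_mul_eq_one (h : a * a' = 1) (h' : a' * a = 1) (z : B) :
    associator a a' z = 0 := by
  rw [associator, h, one_mul, mul_mul_cancel_left_of_mul_eq_one h h', sub_self]

theorem mul_mul_mul_eq_one_of_mul_eq_one {p p' q q' : B} (hp : p * p' = 1) (hp' : p' * p = 1)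
    (hq : q * q' = 1) (hq' : q' * q = 1) : p * q * (q' * p') = 1 := by
  have hpqq' : associator p q q' = 0 := by
    rw [← associator_cycle, associator_eq_zero_of_mul_eq_one hq hq']
  have hpq : p * q * q' = p := by
    rwa [associator, hq, mul_one, sub_eq_zero] at hpqq'
  have hmid : associator p' (p * q) q' = 0 := by
    have h := associator_cocycle p' p q q'
    have hone : associator 1 q q' = 0 := by rw [associator, one_mul, one_mul, sub_self]
    simpa only [hp', hq, associator_eq_zero_of_mul_eq_one hp' hp, hpqq', hone, mul_zero,
      zero_mul, add_zero, sub_zero, zero_add] using h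
  rw [← associator_cycle, associator, hpq, hp, sub_eq_zero] at hmid
  exact hmid.symm

end Unital

instance Unitization.instIsAlternative {R A : Type*} [CommRing R] [NonUnitalNonAssocRing A]
    [Module R A] [IsScalarTower R A A] [SMulCommClass R A A] [IsAlternative A] :
    IsAlternative (Unitization R A) where
  mul_self_mul x y := by
    ext
    · simp only [Unitization.fst_mul]; ring
    · simp only [Unitization.snd_mul, Unitization.fst_mul, smul_add, mul_add, add_mul,
        mul_smul_comm, smul_mul_assoc, smul_smul, IsAlternative.mul_self_mul]
      rw [mul_comm y.fst x.fst]
      abel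
  mul_mul_self x y := by
    ext
    · simp only [Unitization.fst_mul]; ring
    · simp only [Unitization.snd_mul, Unitization.fst_mul, smul_add, mul_add, add_mul,
        mul_smul_comm, smul_mul_assoc, smul_smul, IsAlternative.mul_mul_self]
      rw [mul_comm y.fst x.fst]
      abel

section Circle

variable {A : Type*} [NonUnitalNonAssocRing A]

@[simp] theorem circ_zero_left (x : A) : circ 0 x = x := by simp [circ]

@[simp] theorem circ_zero_right (x : A) : circ x 0 = x := by simp [circ]

theorem IsQuasiinv.circ_eq_zero {x a : A} (h : IsQuasiinv x a) : circ x a = 0 := h.1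

theorem IsQuasiinv.symm {x a : A} (h : IsQuasiinv x a) : IsQuasiinv a x := by
  unfold IsQuasiinv at *
  rw [add_comm a x]
  exact h.symm

theorem RingCon.circ {c : RingCon A} {x x' y y' : A} (hx : c x x') (hy : c y y') :
    c (circ x y) (circ x' y') :=
  c.sub (c.add hx hy) (c.mul hx hy)

theorem Unitization.one_sub_inr_circ {R : Type*} [CommRing R] [Module R A] (x y : A) :
    (1 - ↑(circ x y) : Unitization R A) = (1 - ↑x) * (1 - ↑y) := by
  simp only [circ, Unitization.inr_sub, Unitization.inr_add, Unitization.inr_mul,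
    mul_sub, sub_mul, one_mul, mul_one]
  abel

theorem IsQuasiinv.one_sub_mul_one_sub {R : Type*} [CommRing R] [Module R A] {x a : A}
    (h : IsQuasiinv x a) : (1 - ↑x : Unitization R A) * (1 - ↑a) = 1 := by
  rw [← Unitization.one_sub_inr_circ, h.circ_eq_zero, Unitization.inr_zero, sub_zero]

theorem circ_circ_circ_eq_zero [IsAlternative A] {x y a b : A} (hxa : IsQuasiinv x a)
    (hyb : IsQuasiinv y b) : circ (circ x y) (circ b a) = 0 := by
  have h := mul_mul_mul_eq_one_of_mul_eq_one (B := Unitization ℤ A) hxa.one_sub_mul_one_sub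
    hxa.symm.one_sub_mul_one_sub hyb.one_sub_mul_one_sub hyb.symm.one_sub_mul_one_sub
  rw [← Unitization.one_sub_inr_circ, ← Unitization.one_sub_inr_circ,
    ← Unitization.one_sub_inr_circ, sub_eq_self] at h
  exact Unitization.inr_injective (R := ℤ) (h.trans (Unitization.inr_zero ℤ).symm)

end Circle

theorem normality_memberships_general {A : Type*} [NonUnitalNonAssocRing A]
    (altl : ∀ x y : A, x * (x * y) = (x * x) * y)
    (altr : ∀ x y : A, (y * x) * x = y * (x * x))
    (R : Set A) (hR0 : (0 : A) ∈ R)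
    (hRadd : ∀ x ∈ R, ∀ y ∈ R, x + y ∈ R)
    (hRneg : ∀ x ∈ R, -x ∈ R)
    (hRmul : ∀ a : A, ∀ r ∈ R, a * r ∈ R ∧ r * a ∈ R)
    (x y a b u : A) (hxa : IsQuasiinv x a) (hyb : IsQuasiinv y b)
    (huR : u ∈ R) :
    circ (circ x u) a ∈ R ∧ circ (circ (circ u x) y) (circ b a) ∈ R := by
  have : IsAlternative A := ⟨altl, altr⟩
  obtain ⟨I, rfl⟩ : ∃ I : TwoSidedIdeal A, (I : Set A) = R :=
    ⟨.mk' R hR0 (hRadd _ · _ ·) (hRneg _ ·) (fun {r _} hs => (hRmul r _ hs).1)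
      (fun {_ s} hr => (hRmul s _ hr).2), TwoSidedIdeal.coe_mk' ..⟩
  have hrefl : ∀ z, I.ringCon z z := I.ringCon.refl
  simp only [SetLike.mem_coe, TwoSidedIdeal.mem_iff] at huR ⊢
  constructor
  · rw [← hxa.circ_eq_zero]
    simpa using RingCon.circ (RingCon.circ (hrefl x) huR) (hrefl a)
  · rw [← circ_circ_circ_eq_zero hxa hyb]
    simpa using
      RingCon.circ (RingCon.circ (RingCon.circ huR (hrefl x)) (hrefl y)) (hrefl (circ b a))

/-- **from Proposition 1.7.**  Let `A` be an alternative ring and `R` a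
two-sided ideal of `A`.  If `x, y ∈ A` are quasiregular with quasiinverses `a, b`
respectively and `u ∈ R` is quasiregular, then `(x ∘ u) ∘ a ∈ R` and
`((u ∘ x) ∘ y) ∘ (b ∘ a) ∈ R`. -/
theorem normality_memberships {A : Type*} [NonUnitalNonAssocRing A]
    (altl : ∀ x y : A, x * (x * y) = (x * x) * y)
    (altr : ∀ x y : A, (y * x) * x = y * (x * x))
    (R : Set A) (hR0 : (0 : A) ∈ R)
    (hRadd : ∀ x ∈ R, ∀ y ∈ R, x + y ∈ R)
    (hRneg : ∀ x ∈ R, -x ∈ R)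
    (hRmul : ∀ a : A, ∀ r ∈ R, a * r ∈ R ∧ r * a ∈ R)
    (x y a b u : A) (hxa : IsQuasiinv x a) (hyb : IsQuasiinv y b)
    (huR : u ∈ R) (hu : IsQuasireg u) :
    circ (circ x u) a ∈ R ∧ circ (circ (circ u x) y) (circ b a) ∈ R :=
  normality_memberships_general altl altr R hR0 hRadd hRneg hRmul x y a b u hxa hyb huR
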